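/- arXiv:1907.10268 — 8 statements merged into one kernel-verified Lean document; each statement's English description precedes it below -/
import Mathlib

section
/- Let B = {b₁,...,bₙ} ⊆ ℤ^r and let I_B ⊆ ℤ[x₁,...,x_r] be the ideal generated by the binomials f_i = x^{b_i⁺} - x^{b_i⁻}. Assume that for each i, also -b_i ∈ B. If P ∈ I_B is a pure difference binomial, then there exist monomials m and n, a sign function ε: {1,...,n} → {+,-}, and t: {1,...,n} → ℕ such that n·P = m·S(ε,t), where S(ε,t) = ∏_{i=1}^n (f_i^{ε(i)})^{t(i)} - ∏_{i=1}^n (f_i^{-ε(i)})^{t(i)}. -/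
open MvPolynomial

noncomputable def xpow {r : ℕ} (d : Fin r → ℕ) : MvPolynomial (Fin r) ℤ :=
  ∏ j, X j ^ d j

def posPart {r : ℕ} (b : Fin r → ℤ) : Fin r → ℕ := fun j => (b j).toNat
def negPart {r : ℕ} (b : Fin r → ℤ) : Fin r → ℕ := fun j => (-(b j)).toNat

/-- The monomial `f_i^{ε(i)}`: `f_i⁺ = x^{b_i⁺}` if the sign is `+` (encoded `true`),
and `f_i⁻ = x^{b_i⁻}` if the sign is `-` (encoded `false`). -/
noncomputable def fpart {r n : ℕ} (B : Fin n → (Fin r → ℤ)) (i : Fin n) (s : Bool) :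
    MvPolynomial (Fin r) ℤ :=
  if s then xpow (posPart (B i)) else xpow (negPart (B i))

/-- The iterated subtraction binomial `S(ε,t) = ∏ᵢ (fᵢ^{ε(i)})^{t(i)} - ∏ᵢ (fᵢ^{-ε(i)})^{t(i)}`. -/
noncomputable def iterS {r n : ℕ} (B : Fin n → (Fin r → ℤ)) (ε : Fin n → Bool)
    (t : Fin n → ℕ) : MvPolynomial (Fin r) ℤ :=
  ∏ i, (fpart B i (ε i)) ^ t i - ∏ i, (fpart B i (!ε i)) ^ t i

/-!
A pure difference binomial `x^p - x^q` in `I_B` forces `p - q` into the lattice `L_B` spanned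
by `B`: the ring map sending `x^d` to the class of `d` in the group algebra of `ℤ^r ⧸ L_B`
kills every `f_i`, so it kills `x^p - x^q`. Writing `p - q = ∑ cᵢ bᵢ`, take `t i = |cᵢ|` and
`ε i` the sign of `cᵢ`. The two monomials of `S(ε,t)` then have exponents whose difference is
again `∑ cᵢ bᵢ = p - q`, so `P` and `S(ε,t)` agree up to monomial factors.
-/

section xpow
variable {r : ℕ}

lemma xpow_add (a b : Fin r → ℕ) : xpow (a + b) = xpow a * xpow b := by
  simp only [xpow, Pi.add_apply, pow_add, Finset.prod_mul_distrib]

lemma xpow_pow (d : Fin r → ℕ) (k : ℕ) : xpow d ^ k = xpow (k • d) := by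
  simp only [xpow, ← Finset.prod_pow, ← pow_mul, Pi.smul_apply, smul_eq_mul, mul_comm]

lemma prod_xpow {ι : Type*} (s : Finset ι) (d : ι → Fin r → ℕ) :
    ∏ i ∈ s, xpow (d i) = xpow (∑ i ∈ s, d i) := by
  simp only [xpow, Finset.sum_apply, ← Finset.prod_pow_eq_pow_sum]
  exact Finset.prod_comm

lemma xpow_mul_xpow_sub_xpow {a c p q : Fin r → ℕ}
    (h : ∀ j, (a j : ℤ) - c j = p j - q j) :
    xpow a * (xpow p - xpow q) = xpow p * (xpow a - xpow c) := by
  have hexp : a + q = p + c := funext fun j => by have := h j; simp only [Pi.add_apply]; omega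
  rw [mul_sub, mul_sub, ← xpow_add, ← xpow_add, ← xpow_add, ← xpow_add, add_comm a, hexp]

end xpow

lemma natCast_posPart_sub_negPart {r : ℕ} (b : Fin r → ℤ) (j : Fin r) :
    (_root_.posPart b j : ℤ) - _root_.negPart b j = b j := by
  simp only [_root_.posPart, _root_.negPart]
  omega

section lattice
variable {r n : ℕ} (B : Fin n → Fin r → ℤ)

noncomputable def binomialIdeal : Ideal (MvPolynomial (Fin r) ℤ) :=
  Ideal.span (Set.range fun i => xpow (_root_.posPart (B i)) - xpow (_root_.negPart (B i)))

noncomputable def latticeHom :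
    MvPolynomial (Fin r) ℤ →ₐ[ℤ]
      AddMonoidAlgebra ℤ ((Fin r → ℤ) ⧸ Submodule.span ℤ (Set.range B)) :=
  aeval fun j => AddMonoidAlgebra.single (Submodule.Quotient.mk (Pi.single j 1)) 1

lemma latticeHom_xpow (d : Fin r → ℕ) :
    latticeHom B (xpow d) =
      AddMonoidAlgebra.single (Submodule.Quotient.mk fun j => (d j : ℤ)) 1 := by
  simp only [xpow, latticeHom, map_prod, map_pow, aeval_X, AddMonoidAlgebra.single_pow, one_pow,
    AddMonoidAlgebra.prod_single, Finset.prod_const_one, ← Submodule.mkQ_apply, ← map_nsmul,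
    ← map_sum]
  congr 3
  funext j
  simp [Pi.single_apply, Finset.sum_apply]

lemma latticeHom_xpow_sub_xpow_eq_zero_iff (p q : Fin r → ℕ) :
    latticeHom B (xpow p - xpow q) = 0 ↔
      (fun j => (p j : ℤ)) - (fun j => (q j : ℤ)) ∈ Submodule.span ℤ (Set.range B) := by
  rw [map_sub, latticeHom_xpow, latticeHom_xpow, sub_eq_zero,
    (AddMonoidAlgebra.single_left_injective one_ne_zero).eq_iff, Submodule.Quotient.eq]

lemma binomialIdeal_le_ker_latticeHom : binomialIdeal B ≤ RingHom.ker (latticeHom B) := by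
  rw [binomialIdeal, Ideal.span_le]
  rintro _ ⟨i, rfl⟩
  have hexp : (fun j => (_root_.posPart (B i) j : ℤ)) - (fun j => (_root_.negPart (B i) j : ℤ))
      = B i := funext (natCast_posPart_sub_negPart (B i))
  rw [SetLike.mem_coe, RingHom.mem_ker, latticeHom_xpow_sub_xpow_eq_zero_iff, hexp]
  exact Submodule.subset_span (Set.mem_range_self i)

lemma exists_sum_mul_eq_sub_of_xpow_sub_xpow_mem {p q : Fin r → ℕ}
    (h : xpow p - xpow q ∈ binomialIdeal B) :
    ∃ c : Fin n → ℤ, ∀ j, ∑ i, c i * B i j = p j - q j := by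
  have hmem := (latticeHom_xpow_sub_xpow_eq_zero_iff B p q).mp
    (RingHom.mem_ker.mp (binomialIdeal_le_ker_latticeHom B h))
  obtain ⟨c, hc⟩ := (Submodule.mem_span_range_iff_exists_fun ℤ).mp hmem
  exact ⟨c, fun j => by simpa [Finset.sum_apply] using congrFun hc j⟩

end lattice

section iterS
variable {r n : ℕ} (B : Fin n → Fin r → ℤ)

def fpartExp (i : Fin n) (s : Bool) : Fin r → ℕ :=
  if s then posPart (B i) else negPart (B i)

lemma fpart_eq_xpow (i : Fin n) (s : Bool) : fpart B i s = xpow (fpartExp B i s) := by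
  unfold fpart fpartExp
  split_ifs <;> rfl

lemma iterS_eq (ε : Fin n → Bool) (t : Fin n → ℕ) :
    iterS B ε t =
      xpow (∑ i, t i • fpartExp B i (ε i)) - xpow (∑ i, t i • fpartExp B i (!ε i)) := by
  simp only [iterS, fpart_eq_xpow, xpow_pow, prod_xpow]

lemma sum_fpartExp_sub_sum_fpartExp (c : Fin n → ℤ) (j : Fin r) :
    ((∑ i, (c i).natAbs • fpartExp B i (decide (0 ≤ c i)) : Fin r → ℕ) j : ℤ) -
        (∑ i, (c i).natAbs • fpartExp B i (!decide (0 ≤ c i)) : Fin r → ℕ) j =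
      ∑ i, c i * B i j := by
  simp only [Finset.sum_apply, Pi.smul_apply, smul_eq_mul]
  push_cast
  rw [← Finset.sum_sub_distrib]
  refine Finset.sum_congr rfl fun i _ => ?_
  have hB := natCast_posPart_sub_negPart (B i) j
  by_cases hc : 0 ≤ c i
  · simp only [fpartExp, hc, decide_true, Bool.not_true, if_true, Bool.false_eq_true, if_false]
    rw [abs_of_nonneg hc, ← mul_sub, hB]
  · simp only [fpartExp, hc, decide_false, Bool.not_false, if_true, Bool.false_eq_true, if_false]
    rw [abs_of_neg (not_le.mp hc), ← mul_sub, ← neg_sub, hB, neg_mul_neg]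

end iterS

theorem stmt2_general (r n : ℕ) (B : Fin n → (Fin r → ℤ))
    (P : MvPolynomial (Fin r) ℤ)
    (hP : P ∈ Ideal.span (Set.range fun i : Fin n =>
      xpow (posPart (B i)) - xpow (negPart (B i))))
    (hPbin : ∃ p q : Fin r → ℕ, P = xpow p - xpow q) :
    ∃ (m nn : Fin r → ℕ) (ε : Fin n → Bool) (t : Fin n → ℕ),
      xpow nn * P = xpow m * iterS B ε t := by
  obtain ⟨p, q, rfl⟩ := hPbin
  obtain ⟨c, hc⟩ := exists_sum_mul_eq_sub_of_xpow_sub_xpow_mem B hP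
  refine ⟨p, ∑ i, (c i).natAbs • fpartExp B i (decide (0 ≤ c i)), fun i => decide (0 ≤ c i),
    fun i => (c i).natAbs, ?_⟩
  rw [iterS_eq]
  exact xpow_mul_xpow_sub_xpow fun j => (sum_fpartExp_sub_sum_fpartExp B c j).trans (hc j)

/-- If `B` is closed under negation, any pure difference binomial `P` in
`I_B = (x^{b_i⁺} - x^{b_i⁻} : i)` satisfies `n·P = m·S(ε,t)` for some monomials
`m`, `n`, a sign vector `ε` and `t : {1,…,n} → ℕ`. -/
theorem stmt2 (r n : ℕ) (B : Fin n → (Fin r → ℤ))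
    (hsym : ∀ i : Fin n, ∃ i' : Fin n, B i' = -B i)
    (P : MvPolynomial (Fin r) ℤ)
    (hP : P ∈ Ideal.span (Set.range fun i : Fin n =>
      xpow (posPart (B i)) - xpow (negPart (B i))))
    (hPbin : ∃ p q : Fin r → ℕ, P = xpow p - xpow q) :
    ∃ (m nn : Fin r → ℕ) (ε : Fin n → Bool) (t : Fin n → ℕ),
      xpow nn * P = xpow m * iterS B ε t :=
  stmt2_general r n B P hP hPbin
end

section
/- Let v₁,...,v_a ∈ ℕ^n, and let C be the intersection of ℕ^n with the rational cone spanned by v₁,...,v_a (i.e., C = ℕ^n ∩ {Σ λ_i v_i : λ_i ∈ ℚ_{≥0}}). Then every element of C is a finite sum of elements of the set (C ∩ {Σ_{i=1}^a λ_i v_i : λ_i ∈ [0,1)}) ∪ {v₁,...,v_a}. -/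
/-!
Write a lattice point `c = Σ λᵢ vᵢ` of the cone as `Σ ⌊λᵢ⌋ vᵢ + r`. The remainder
`r = Σ (λᵢ - ⌊λᵢ⌋) vᵢ` has coefficients in `[0, 1)`, and it is a lattice point because
`Σ ⌊λᵢ⌋ vᵢ ≤ c` coordinatewise, so `r = c - Σ ⌊λᵢ⌋ vᵢ` is a difference in `ℕ^n`.
-/

open Finset

section FloorDecomposition

variable {K ι κ : Type*} [Field K] [LinearOrder K] [IsStrictOrderedRing K] [FloorSemiring K]
  [Fintype ι] {c : κ → ℕ} {v : ι → κ → ℕ} {l : ι → K}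

theorem sum_floor_smul_le (hl0 : ∀ i, 0 ≤ l i) (hl : ∀ j, (c j : K) = ∑ i, l i * v i j) :
    ∑ i, ⌊l i⌋₊ • v i ≤ c := by
  intro j
  have hK : ((∑ i, ⌊l i⌋₊ * v i j : ℕ) : K) ≤ c j := by
    push_cast
    rw [hl j]
    exact sum_le_sum fun i _ => mul_le_mul_of_nonneg_right (Nat.floor_le (hl0 i)) (by positivity)
  simpa only [Finset.sum_apply, Pi.smul_apply, smul_eq_mul] using (Nat.cast_le.mp hK)

theorem exists_eq_add_sum_floor_smul (hl0 : ∀ i, 0 ≤ l i)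
    (hl : ∀ j, (c j : K) = ∑ i, l i * v i j) :
    ∃ r : κ → ℕ, (∀ j, (r j : K) = ∑ i, (l i - ⌊l i⌋₊) * v i j) ∧
      c = r + ∑ i, ⌊l i⌋₊ • v i := by
  have hle := sum_floor_smul_le hl0 hl
  refine ⟨c - ∑ i, ⌊l i⌋₊ • v i, fun j => ?_, (tsub_add_cancel_of_le hle).symm⟩
  rw [Pi.sub_apply, Nat.cast_sub (hle j), hl j]
  simp only [Finset.sum_apply, Pi.smul_apply, smul_eq_mul, Nat.cast_sum, Nat.cast_mul,
    sub_mul, sum_sub_distrib]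

end FloorDecomposition

/-- Lattice points of the rational cone spanned by `v₁,…,v_a ∈ ℕ^n` are generated,
as a monoid, by the `vᵢ` together with the lattice points of the fundamental
parallelepiped `{Σ λᵢ vᵢ : λᵢ ∈ [0,1)}`. -/
theorem stmt4 (n a : ℕ) (v : Fin a → (Fin n → ℕ)) :
    let C : Set (Fin n → ℕ) := {x | ∃ l : Fin a → ℚ, (∀ i, 0 ≤ l i) ∧
      ∀ j, (x j : ℚ) = ∑ i, l i * (v i j : ℚ)}
    let S : Set (Fin n → ℕ) := {x ∈ C | ∃ l : Fin a → ℚ,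
      (∀ i, 0 ≤ l i ∧ l i < 1) ∧ ∀ j, (x j : ℚ) = ∑ i, l i * (v i j : ℚ)} ∪ Set.range v
    ∀ c ∈ C, c ∈ AddSubmonoid.closure S := by
  intro C S c ⟨l, hl0, hl⟩
  obtain ⟨r, hr, rfl⟩ := exists_eq_add_sum_floor_smul hl0 hl
  have hfract : ∀ i, 0 ≤ l i - ⌊l i⌋₊ ∧ l i - ⌊l i⌋₊ < 1 := fun i =>
    ⟨sub_nonneg.mpr (Nat.floor_le (hl0 i)), sub_lt_iff_lt_add'.mpr (Nat.lt_floor_add_one _)⟩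
  have hrS : r ∈ S := Or.inl ⟨⟨_, fun i => (hfract i).1, hr⟩, _, hfract, hr⟩
  have hvS : ∀ i, v i ∈ S := fun i => Or.inr ⟨i, rfl⟩
  exact add_mem (AddSubmonoid.subset_closure hrS) <| AddSubmonoid.sum_mem _ fun i _ =>
    AddSubmonoid.nsmul_mem _ (AddSubmonoid.subset_closure (hvS i)) _
end

section
/- Let b₁,...,bₙ ∈ ℤ^r, let f_j = x^{b_j⁺} - x^{b_j⁻} ∈ ℤ[x₁,...,x_r], and let M be a positive integer. Suppose that Σ_{i=1}^M ε_i m_i f_{j_i} is a pure difference binomial x^{c⁺} - x^{c⁻} (c⁺, c⁻ ∈ ℕ^r), where each ε_i ∈ {1,-1}, each m_i is a monomial, and j_i ∈ {1,...,n}. Then there exist integers a₁,...,aₙ with Σ_{i=1}^n |a_i| ≤ M and c⁺ - c⁻ = Σ_{i=1}^n a_i b_i. -/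
open MvPolynomial

/-! The ℤ-linear functional `p ↦ (∂p/∂x_k)(1, …, 1)` sends `x^d` to `d_k`, and by the Leibniz
rule it sends `m · (x^u - x^v)` to `u_k - v_k` for any monomial `m`, since `x^u - x^v` vanishes
at `(1, …, 1)`. Applied to the given identity it yields `c⁺_k - c⁻_k = Σᵢ εᵢ b_{jᵢ,k}`; grouping
the indices `i` by `jᵢ` gives coefficients `a_j = Σ_{jᵢ = j} εᵢ` with `Σ |a_j| ≤ Σ |εᵢ| = M`. -/

open Finset

lemma xpow_eq_monomial {r : ℕ} (d : Fin r → ℕ) :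
    xpow d = monomial (Finsupp.equivFunOnFinite.symm d) 1 := by
  rw [xpow, prod_X_pow]
  congr
  ext
  simp

lemma eval_one_xpow {r : ℕ} (d : Fin r → ℕ) : eval 1 (xpow d) = 1 := by
  simp [xpow]

lemma eval_one_pderiv_xpow {r : ℕ} (k : Fin r) (d : Fin r → ℕ) :
    eval 1 (pderiv k (xpow d)) = d k := by
  simp [xpow_eq_monomial, eval_monomial]

lemma eval_one_pderiv_C_mul_xpow_mul_sub {r : ℕ} (k : Fin r) (e : ℤ) (u v w : Fin r → ℕ) :
    eval 1 (pderiv k (C e * xpow u * (xpow v - xpow w))) = e * ((v k : ℤ) - w k) := by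
  simp [Derivation.leibniz, eval_one_xpow, eval_one_pderiv_xpow]

lemma posPart_sub_negPart_apply {r : ℕ} (b : Fin r → ℤ) (k : Fin r) :
    ((posPart b k : ℕ) : ℤ) - (negPart b k : ℕ) = b k := by
  simp only [_root_.posPart, _root_.negPart]
  omega

lemma sub_eq_sum_of_sum_binomial_eq {r n M : ℕ} (b : Fin n → (Fin r → ℤ)) (ε : Fin M → ℤ)
    (m : Fin M → (Fin r → ℕ)) (jdx : Fin M → Fin n) (cp cm : Fin r → ℕ)
    (h : ∑ i, C (ε i) * xpow (m i) *
        (xpow (posPart (b (jdx i))) - xpow (negPart (b (jdx i)))) = xpow cp - xpow cm)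
    (k : Fin r) :
    (cp k : ℤ) - cm k = ∑ i, ε i * b (jdx i) k := by
  have hk := congrArg (fun p => eval 1 (pderiv k p)) h
  simp only [map_sum, map_sub, eval_one_pderiv_C_mul_xpow_mul_sub, posPart_sub_negPart_apply,
    eval_one_pderiv_xpow] at hk
  exact hk.symm

section Fiberwise

variable {ι κ : Type*} [Fintype ι] [Fintype κ] [DecidableEq κ]

lemma sum_abs_sum_fiberwise_le {G : Type*} [AddCommGroup G] [LinearOrder G]
    [IsOrderedAddMonoid G] (g : ι → κ) (f : ι → G) :
    ∑ j, |∑ i with g i = j, f i| ≤ ∑ i, |f i| :=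
  calc ∑ j, |∑ i with g i = j, f i|
      ≤ ∑ j, ∑ i with g i = j, |f i| := sum_le_sum fun _ _ => abs_sum_le_sum_abs _ _
    _ = ∑ i, |f i| := sum_fiberwise _ _ _

lemma sum_sum_fiberwise_mul {R : Type*} [NonUnitalNonAssocSemiring R] (g : ι → κ) (f : ι → R)
    (w : κ → R) :
    ∑ j, (∑ i with g i = j, f i) * w j = ∑ i, f i * w (g i) := by
  rw [← sum_fiberwise univ g fun i => f i * w (g i)]
  refine sum_congr rfl fun j _ => ?_
  rw [sum_mul]
  exact sum_congr rfl fun i hi => by rw [(mem_filter.1 hi).2]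

end Fiberwise

theorem stmt5_general (r n M : ℕ) (b : Fin n → (Fin r → ℤ))
    (ε : Fin M → ℤ) (hε : ∀ i, ε i = 1 ∨ ε i = -1)
    (m : Fin M → (Fin r → ℕ)) (jdx : Fin M → Fin n) (cp cm : Fin r → ℕ)
    (h : ∑ i, C (ε i) * xpow (m i) *
        (xpow (posPart (b (jdx i))) - xpow (negPart (b (jdx i))))
      = xpow cp - xpow cm) :
    ∃ a : Fin n → ℤ, (∑ i, |a i|) ≤ (M : ℤ) ∧
      ∀ k, (cp k : ℤ) - (cm k : ℤ) = ∑ i, a i * b i k := by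
  refine ⟨fun j => ∑ i with jdx i = j, ε i, ?_, fun k => ?_⟩
  · have hε_abs : ∀ i, |ε i| = 1 := fun i => by rcases hε i with hi | hi <;> simp [hi]
    calc ∑ j, |∑ i with jdx i = j, ε i| ≤ ∑ i, |ε i| := sum_abs_sum_fiberwise_le jdx ε
      _ = M := by simp [hε_abs]
  · rw [sub_eq_sum_of_sum_binomial_eq b ε m jdx cp cm h k]
    exact (sum_sum_fiberwise_mul jdx ε fun j => b j k).symm

/-- If a signed sum `Σ_{i=1}^M εᵢ mᵢ f_{jᵢ}` of monomial multiples of the binomials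
`f_j = x^{b_j⁺} - x^{b_j⁻}` is a pure difference binomial `x^{c⁺} - x^{c⁻}`, then
`c⁺ - c⁻ = Σ aᵢ bᵢ` for integers `aᵢ` with `Σ |aᵢ| ≤ M`. -/
theorem stmt5 (r n M : ℕ) (hM : 1 ≤ M) (b : Fin n → (Fin r → ℤ))
    (ε : Fin M → ℤ) (hε : ∀ i, ε i = 1 ∨ ε i = -1)
    (m : Fin M → (Fin r → ℕ)) (jdx : Fin M → Fin n) (cp cm : Fin r → ℕ)
    (h : ∑ i, C (ε i) * xpow (m i) *
        (xpow (posPart (b (jdx i))) - xpow (negPart (b (jdx i))))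
      = xpow cp - xpow cm) :
    ∃ a : Fin n → ℤ, (∑ i, |a i|) ≤ (M : ℤ) ∧
      ∀ k, (cp k : ℤ) - (cm k : ℤ) = ∑ i, a i * b i k :=
  stmt5_general r n M b ε hε m jdx cp cm h
end

section
/- Let A = [1,1,1] (a 1×3 matrix), let n ≥ 2 be an integer, and let B_n = {(0,1,-1), (-1,n,1-n)} ⊆ ℤ³. Then B_n is a ℤ-basis of the kernel of A, the fibre F(e₂) = {v ∈ ℕ³ : v₁+v₂+v₃ = 1} equals {e₁, e₂, e₃}, and the graph on F(e₂) with edges given by ±B_n has exactly two connected components, namely {e₂, e₃} and {e₁}. -/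
abbrev kerVec₁ : Fin 3 → ℤ := ![0, 1, -1]

abbrev kerVec₂ (n : ℤ) : Fin 3 → ℤ := ![-1, n, 1 - n]

abbrev moves (n : ℤ) : Set (Fin 3 → ℤ) := {kerVec₁, -kerVec₁, kerVec₂ n, -kerVec₂ n}

abbrev stdBasisNat (i : Fin 3) : Fin 3 → ℕ := fun j => if j = i then 1 else 0

lemma kerVec₁_sum : kerVec₁ 0 + kerVec₁ 1 + kerVec₁ 2 = 0 := by
  simp

lemma kerVec₂_sum (n : ℤ) : kerVec₂ n 0 + kerVec₂ n 1 + kerVec₂ n 2 = 0 := by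
  simp

/-- The coefficients are read off the first two coordinates: `d = -v₀` and `c = v₁ + n v₀`. -/
lemma exists_eq_smul_kerVec₁_add_smul_kerVec₂ (n : ℤ) {v : Fin 3 → ℤ}
    (hv : v 0 + v 1 + v 2 = 0) : ∃ c d : ℤ, v = c • kerVec₁ + d • kerVec₂ n := by
  refine ⟨v 1 + v 0 * n, -v 0, funext fun i => ?_⟩
  fin_cases i <;> simp
  linarith

lemma eq_zero_of_smul_kerVec₁_add_smul_kerVec₂_eq_zero (n : ℤ) {c d : ℤ}
    (h : c • kerVec₁ + d • kerVec₂ n = 0) : c = 0 ∧ d = 0 := by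
  have h0 := congrFun h 0
  have h1 := congrFun h 1
  simp at h0 h1
  subst h0
  simpa using h1

lemma setOf_sum_eq_one :
    {v : Fin 3 → ℕ | v 0 + v 1 + v 2 = 1} = {stdBasisNat 0, stdBasisNat 1, stdBasisNat 2} := by
  ext v
  simp only [Set.mem_ofPred_eq, Set.mem_insert_iff, Set.mem_singleton_iff]
  constructor
  · intro hv
    have hcases : (v 0 = 1 ∧ v 1 = 0 ∧ v 2 = 0) ∨ (v 0 = 0 ∧ v 1 = 1 ∧ v 2 = 0) ∨
        (v 0 = 0 ∧ v 1 = 0 ∧ v 2 = 1) := by omega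
    rcases hcases with ⟨h0, h1, h2⟩ | ⟨h0, h1, h2⟩ | ⟨h0, h1, h2⟩ <;>
      [left; (right; left); (right; right)] <;>
      funext j <;> fin_cases j <;> simp [h0, h1, h2]
  · rintro (rfl | rfl | rfl) <;> rfl

/-- Only `-kerVec₂ n = (1, -n, n - 1)` has first coordinate `1`. -/
lemma notMem_moves_of_apply_zero_eq_one {n : ℤ} {v : Fin 3 → ℤ} (h0 : v 0 = 1)
    (h1 : v 1 ≠ -n) : v ∉ moves n := by
  rintro (rfl | rfl | rfl | rfl) <;> simp at h0 h1

lemma stdBasisNat_one_sub_stdBasisNat_two :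
    (fun i => (stdBasisNat 1 i : ℤ) - stdBasisNat 2 i) = kerVec₁ := by
  funext i
  fin_cases i <;> rfl

/-- For `A = [1,1,1]` and `n ≥ 2`, the set `B_n = {(0,1,-1), (-1,n,1-n)}` is a
ℤ-basis of the kernel of `A`; the fibre `F(e₂) = {v ∈ ℕ³ : v₁+v₂+v₃ = 1}` equals
`{e₁,e₂,e₃}`; and the graph on `F(e₂)` with edges given by `±B_n` has exactly two
connected components `{e₂,e₃}` and `{e₁}` (i.e. `e₂` and `e₃` are adjacent, while
`e₁` is adjacent to neither). -/
theorem stmt10 (n : ℕ) (hn : 2 ≤ n) :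
    let b₁ : Fin 3 → ℤ := ![0,1,-1]
    let b₂ : Fin 3 → ℤ := ![-1,(n:ℤ),1-(n:ℤ)]
    let moves : Set (Fin 3 → ℤ) := {b₁, -b₁, b₂, -b₂}
    let e : Fin 3 → (Fin 3 → ℕ) := fun i => fun j => if j = i then 1 else 0
    let F : Set (Fin 3 → ℕ) := {v | v 0 + v 1 + v 2 = 1}
    let Adj : (Fin 3 → ℕ) → (Fin 3 → ℕ) → Prop := fun v w =>
      v ∈ F ∧ w ∈ F ∧ v ≠ w ∧ (fun i => (v i : ℤ) - (w i : ℤ)) ∈ moves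
    -- B_n is a ℤ-basis of the kernel of A = [1,1,1]
    ((b₁ 0 + b₁ 1 + b₁ 2 = 0 ∧ b₂ 0 + b₂ 1 + b₂ 2 = 0) ∧
      (∀ v : Fin 3 → ℤ, v 0 + v 1 + v 2 = 0 → ∃ c d : ℤ, v = c • b₁ + d • b₂) ∧
      (∀ c d : ℤ, c • b₁ + d • b₂ = 0 → c = 0 ∧ d = 0)) ∧
    -- the fibre is {e₁, e₂, e₃}
    F = {e 0, e 1, e 2} ∧
    -- exactly two connected components: {e₂, e₃} and {e₁}
    Adj (e 1) (e 2) ∧ ¬ Adj (e 0) (e 1) ∧ ¬ Adj (e 0) (e 2) := by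
  intro b₁ b₂ moves e F Adj
  refine ⟨⟨⟨kerVec₁_sum, kerVec₂_sum n⟩,
    fun v hv => exists_eq_smul_kerVec₁_add_smul_kerVec₂ n hv,
    fun c d h => eq_zero_of_smul_kerVec₁_add_smul_kerVec₂_eq_zero n h⟩,
    setOf_sum_eq_one, ?_, ?_, ?_⟩
  · exact ⟨rfl, rfl, fun h => by simpa [e] using congrFun h 1,
      Or.inl stdBasisNat_one_sub_stdBasisNat_two⟩
  · exact fun ⟨_, _, _, h⟩ => notMem_moves_of_apply_zero_eq_one (n := n) (by simp [e])
      (by simp [e]; omega) h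
  · exact fun ⟨_, _, _, h⟩ => notMem_moves_of_apply_zero_eq_one (n := n) (by simp [e])
      (by simp [e]; omega) h
end

section
/- Let n ≥ 2, A = [1,1,1], B_n = {(0,1,-1), (-1,n,1-n)}. If c₁,...,c_s ∈ ±B_n satisfy e₁ + Σ_{i=1}^s c_i ∈ {e₂, e₃}, then s ≥ n - 1. -/
/-- For `B_n = {(0,1,-1), (-1,n,1-n)}` with `n ≥ 2`: if `c₁,…,c_s ∈ ±B_n` satisfy
`e₁ + Σᵢ cᵢ ∈ {e₂, e₃}`, then `s ≥ n - 1`. -/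
theorem stmt11 (n : ℕ) (hn : 2 ≤ n) (s : ℕ) (c : Fin s → (Fin 3 → ℤ))
    (hc : ∀ i, c i ∈ ({![0,1,-1], -![0,1,-1], ![-1,(n:ℤ),1-(n:ℤ)],
      -![-1,(n:ℤ),1-(n:ℤ)]} : Set (Fin 3 → ℤ)))
    (h : (![1,0,0] : Fin 3 → ℤ) + ∑ i, c i = ![0,1,0] ∨
         (![1,0,0] : Fin 3 → ℤ) + ∑ i, c i = ![0,0,1]) :
    n - 1 ≤ s := by
  set L : Fin s → ℤ := fun i => (n : ℤ) * c i 0 + c i 1 with hLdef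
  have hL : ∀ i, |L i| ≤ 1 := by
    intro i
    rw [abs_le]
    have h4 := hc i
    simp only [Set.mem_insert_iff, Set.mem_singleton_iff] at h4
    rcases h4 with h1 | h1 | h1 | h1 <;> simp [hLdef, h1, Matrix.neg_apply]
  have hsum : ∑ i, L i = (n : ℤ) * (∑ i, c i 0) + ∑ i, c i 1 := by
    rw [Finset.mul_sum, ← Finset.sum_add_distrib]
  have h0 : ∑ i, c i 0 = -1 := by
    rcases h with h | h <;>
    · have := congrFun h 0
      simp [Finset.sum_apply] at this
      omega
  have h1 : ∑ i, c i 1 = 1 ∨ ∑ i, c i 1 = 0 := by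
    rcases h with h | h <;> [left; right] <;>
    · have := congrFun h 1
      simp [Finset.sum_apply] at this
      omega
  have habs : (n : ℤ) - 1 ≤ |∑ i, L i| := by
    rcases h1 with h1 | h1 <;> rw [hsum, h0, h1] <;>
      refine le_trans ?_ (neg_le_abs _) <;> linarith
  have hbound : |∑ i, L i| ≤ (s : ℤ) := by
    calc |∑ i, L i| ≤ ∑ i, |L i| := Finset.abs_sum_le_sum_abs _ _
    _ ≤ ∑ _i : Fin s, (1 : ℤ) := Finset.sum_le_sum fun i _ => hL i
    _ = s := by simp
  omega
end

section
/- Let u = (2,2,...,2) ∈ ℕ^n (n ≥ 4) and A_n the 2×n matrix with rows (1,2,...,n) and (n,n-1,...,1). Let B_n = {b₂,...,b_{n-1}} where b_k ∈ ℤ^n has entries 1, -2, 1 in positions k-1, k, k+1 and 0 elsewhere. Let v = (n,0,...,0,n) ∈ ℕ^n. Then v ∈ F(u), and for any c₁,...,c_s ∈ ±B_n with v + Σ_{i=1}^s c_i ∈ F(u), either s ≥ n-2 or v + Σ_{i=1}^s c_i = v. -/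
/-!
Let `m t` be the net number of times the move `b_t` is used. The coordinates of `w - v` are
the second differences of `m`, and `m` vanishes at both ends. Since `v` vanishes in the interior
and `w ≥ 0`, `m` is discretely convex, hence `m ≤ 0`; a walk with fewer than `n - 2` steps misses
some move, so `m` attains its maximum `0` at an interior point and the strong maximum principle
forces `m = 0`, i.e. `w = v`. For `v ∈ F`: each row `a` of `A_n` satisfies
`a_j + a_{n+1-j} = n + 1`, so pairing mirror coordinates gives
`∑ 2 a_j = n (n + 1) = n (a_1 + a_n)`.
-/

open Finset

section DiscreteConvex

variable {α : Type*} [AddCommGroup α] [LinearOrder α] [IsOrderedAddMonoid α]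

def DiscreteConvexOn (N : ℕ) (m : ℕ → α) : Prop :=
  ∀ i, i + 2 ≤ N → m (i + 1) + m (i + 1) ≤ m i + m (i + 2)

namespace DiscreteConvexOn

variable {N : ℕ} {m : ℕ → α}

lemma neighbours_eq_of_forall_le (hm : DiscreteConvexOn N m) {j : ℕ}
    (hmax : ∀ i ≤ N, m i ≤ m j) {i : ℕ} (hi : i + 2 ≤ N) (hij : m (i + 1) = m j) :
    m i = m j ∧ m (i + 2) = m j := by
  have hconv := hm i hi
  rw [hij] at hconv
  have hle := hmax i (by omega)
  have hle' := hmax (i + 2) hi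
  constructor
  · refine le_antisymm hle (not_lt.1 fun hlt => ?_)
    exact not_lt.2 hconv (add_lt_add_of_lt_of_le hlt hle')
  · refine le_antisymm hle' (not_lt.1 fun hlt => ?_)
    exact not_lt.2 hconv (add_lt_add_of_le_of_lt hle hlt)

/-- The discrete strong maximum principle. -/
lemma eq_of_forall_le (hm : DiscreteConvexOn N m) {j : ℕ} (hj₀ : 0 < j) (hjN : j < N)
    (hmax : ∀ i ≤ N, m i ≤ m j) {i : ℕ} (hi : i ≤ N) : m i = m j := by
  rcases le_total i j with hij | hji
  · induction hij using Nat.decreasingInduction with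
    | self => rfl
    | of_succ i hij ih => exact (hm.neighbours_eq_of_forall_le hmax (by omega) (ih (by omega))).1
  · induction i, hji using Nat.le_induction with
    | base => rfl
    | succ i hji ih =>
      obtain ⟨p, rfl⟩ : ∃ p, i = p + 1 := ⟨i - 1, by omega⟩
      exact (hm.neighbours_eq_of_forall_le hmax hi (ih (by omega))).2

lemma le_max_endpoints (hm : DiscreteConvexOn N m) {i : ℕ} (hi : i ≤ N) :
    m i ≤ max (m 0) (m N) := by
  obtain ⟨j, hj, hjmax⟩ := (range (N + 1)).exists_max_image m ⟨0, by simp⟩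
  simp only [mem_range, Nat.lt_succ_iff] at hj hjmax
  refine (hjmax i hi).trans ?_
  rcases Nat.eq_zero_or_pos j with rfl | hj₀
  · exact le_max_left _ _
  rcases hj.lt_or_eq with hjN | rfl
  · exact (hm.eq_of_forall_le hj₀ hjN hjmax (Nat.zero_le N)).ge.trans (le_max_left _ _)
  · exact le_max_right _ _

lemma eq_zero_of_eq_zero (hm : DiscreteConvexOn N m) (h₀ : m 0 = 0) (hN : m N = 0) {j : ℕ}
    (hj₀ : 0 < j) (hjN : j < N) (hj : m j = 0) {i : ℕ} (hi : i ≤ N) : m i = 0 := by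
  rw [← hj]
  refine hm.eq_of_forall_le hj₀ hjN (fun i hi => ?_) hi
  simpa [h₀, hN, hj] using hm.le_max_endpoints hi

end DiscreteConvexOn

end DiscreteConvex

/-- `bMove k` is the paper's `b_{k+1}`: coordinates are indexed from `0`, so its `-2` sits at
position `k`. -/
def bMove (k j : ℕ) : ℤ :=
  if j + 1 = k then 1 else if j = k then -2 else if j = k + 1 then 1 else 0

def netCount {s : ℕ} (k : Fin s → ℕ) (ε : Fin s → ℤ) (t : ℕ) : ℤ :=
  ∑ i with k i = t, ε i

lemma netCount_eq_zero {s : ℕ} {k : Fin s → ℕ} (ε : Fin s → ℤ) {t : ℕ} (h : ∀ i, k i ≠ t) :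
    netCount k ε t = 0 :=
  sum_eq_zero fun i hi => absurd (mem_filter.1 hi).2 (h i)

lemma sum_mul_bMove {s : ℕ} {k : Fin s → ℕ} (ε : Fin s → ℤ) (hk : ∀ i, 1 ≤ k i) (j : ℕ) :
    ∑ i, ε i * bMove (k i) j =
      netCount k ε (j + 1) - 2 * netCount k ε j + netCount k ε (j - 1) := by
  simp only [netCount, sum_filter, mul_sum, ← sum_sub_distrib, ← sum_add_distrib]
  refine sum_congr rfl fun i _ => ?_
  have := hk i
  unfold bMove
  split_ifs <;> omega

lemma Fin.sum_mul_two_eq_of_add_rev {R : Type*} [Semiring R] {n : ℕ} {K : R} (a : Fin n → R)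
    (ha : ∀ j, a j + a j.rev = K) : ∑ j, a j * 2 = n * K := by
  calc ∑ j, a j * 2 = ∑ j, a j + ∑ j : Fin n, a j.rev := by
        simp only [mul_two, sum_add_distrib]; congr 1; exact (Equiv.sum_comp Fin.revPerm a).symm
    _ = n * K := by simp [← sum_add_distrib, ha]

lemma Fin.sum_mul_ite_or_rev {R : Type*} [Semiring R] {n : ℕ} (a : Fin n → R) {i : Fin n}
    (hi : i ≠ i.rev) (c : R) :
    ∑ j, a j * (if j = i ∨ j = i.rev then c else 0) = (a i + a i.rev) * c := by
  rw [Fintype.sum_eq_add i i.rev hi (fun j hj => by simp [hj.1, hj.2]), add_mul]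
  simp

theorem eq_of_eq_add_sum_mul_bMove {n s : ℕ} {k : Fin s → ℕ} (ε : Fin s → ℤ)
    (hk : ∀ i, 1 ≤ k i ∧ k i ≤ n - 2) {k₀ : ℕ} (hk₀ : 1 ≤ k₀ ∧ k₀ ≤ n - 2)
    (hmiss : ∀ i, k i ≠ k₀) {v w : Fin n → ℕ}
    (hv : ∀ j : Fin n, 0 < (j : ℕ) → (j : ℕ) < n - 1 → v j = 0)
    (hw : ∀ j, (w j : ℤ) = v j + ∑ i, ε i * bMove (k i) j) : w = v := by
  have hsum := sum_mul_bMove ε fun i => (hk i).1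
  set m := netCount k ε
  have hm_out : ∀ t, t = 0 ∨ n - 1 ≤ t → m t = 0 := fun t ht =>
    netCount_eq_zero ε fun i => by have := hk i; omega
  have hconv : DiscreteConvexOn (n - 1) m := by
    intro i hi
    have h := hw ⟨i + 1, by omega⟩
    rw [hv _ (by simp) (by simp; omega), hsum] at h
    simp only [Nat.add_sub_cancel, add_assoc, Nat.reduceAdd, Nat.cast_zero, zero_add] at h
    linarith [(w ⟨i + 1, by omega⟩).cast_nonneg (α := ℤ)]
  have hm : ∀ t, m t = 0 := by
    intro t
    rcases lt_or_ge t (n - 1) with ht | ht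
    · exact hconv.eq_zero_of_eq_zero (hm_out 0 (.inl rfl)) (hm_out _ (.inr le_rfl)) hk₀.1
        (by omega) (netCount_eq_zero ε hmiss) ht.le
    · exact hm_out t (.inr ht)
  funext j
  have h := hw j
  rw [hsum, hm, hm, hm] at h
  exact_mod_cast (by simpa using h)

/-- For `A_n` with rows `(1,2,…,n)` and `(n,n-1,…,1)`, `u = (2,…,2)`, moves
`b_k` (entries `1,-2,1` at positions `k-1,k,k+1`), and `v = (n,0,…,0,n)`:
`v` lies in the fibre `F(u)`, and any walk `v + Σ cᵢ` with steps `cᵢ ∈ ±B_n`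
landing back in `F(u)` either has length `≥ n-2` or returns to `v`. -/
theorem stmt15 (n : ℕ) (hn : 4 ≤ n) :
    let F : Set (Fin n → ℕ) := {w | (∑ j : Fin n, ((j : ℕ) + 1) * w j = ∑ j : Fin n, ((j : ℕ) + 1) * 2) ∧
      (∑ j : Fin n, (n - (j : ℕ)) * w j = ∑ j : Fin n, (n - (j : ℕ)) * 2)}
    let bvec : ℕ → (Fin n → ℤ) := fun k j =>
      if (j : ℕ) + 1 = k then 1 else if (j : ℕ) = k then -2 else
        if (j : ℕ) = k + 1 then 1 else 0
    let v : Fin n → ℕ := fun j => if (j : ℕ) = 0 ∨ (j : ℕ) = n - 1 then n else 0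
    v ∈ F ∧
    ∀ (s : ℕ) (c : Fin s → (Fin n → ℤ)),
      (∀ i, ∃ k : ℕ, 1 ≤ k ∧ k ≤ n - 2 ∧ (c i = bvec k ∨ c i = -bvec k)) →
      ∀ w : Fin n → ℕ, w ∈ F → (∀ j, (w j : ℤ) = (v j : ℤ) + ∑ i, c i j) →
        n - 2 ≤ s ∨ w = v := by
  intro F bvec v
  let i₀ : Fin n := ⟨0, by omega⟩
  have hi₀ : i₀ ≠ i₀.rev := by simp [i₀, Fin.ext_iff, Fin.val_rev]; omega
  have hv : v = fun j => if j = i₀ ∨ j = i₀.rev then n else 0 := by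
    funext j; simp [v, i₀, Fin.ext_iff, Fin.val_rev]
  have hvF : ∀ a : Fin n → ℕ, (∀ j, a j + a j.rev = n + 1) → ∑ j, a j * v j = ∑ j, a j * 2 :=
    fun a ha => by
      rw [hv, Fin.sum_mul_ite_or_rev a hi₀, ha, Fin.sum_mul_two_eq_of_add_rev a ha, Nat.cast_id,
        mul_comm]
  refine ⟨⟨hvF _ fun j => ?_, hvF _ fun j => ?_⟩, fun s c hc w _ hw => ?_⟩
  · simp only [Fin.val_rev]; omega
  · simp only [Fin.val_rev]; omega
  rcases le_or_gt (n - 2) s with hs | hs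
  · exact .inl hs
  have hc' : ∀ i, ∃ k, (1 ≤ k ∧ k ≤ n - 2) ∧ ∃ e : ℤ, c i = e • bvec k := fun i => by
    obtain ⟨k, hk1, hk2, hck | hck⟩ := hc i
    exacts [⟨k, ⟨hk1, hk2⟩, 1, by simp [hck]⟩, ⟨k, ⟨hk1, hk2⟩, -1, by simp [hck]⟩]
  choose k hk ε hε using hc'
  obtain ⟨k₀, hk₀, hmiss⟩ : ∃ k₀ ∈ Icc 1 (n - 2), k₀ ∉ univ.image k :=
    exists_mem_notMem_of_card_lt_card (card_image_le.trans_lt (by simpa using hs))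
  exact .inr (eq_of_eq_add_sum_mul_bMove ε hk (by simpa using hk₀) (by simpa using hmiss)
    (fun j h₀ h₁ => if_neg (by omega)) fun j => by simp [hw j, hε, bMove, bvec])
end

section
/- Let B ⊆ ℤ^r be a finite set and I_B ⊆ ℚ[x₁,...,x_r] the ideal generated by the pure binomials x^{b⁺} - x^{b⁻} for b ∈ B. Then the saturation of I_B with respect to x₁⋯x_r is again generated by pure difference binomials. -/
/-! Let `L ⊆ ℤ^r` be the lattice generated by `B`; the saturation is the lattice ideal `I_L`,
spanned by all `x^p - x^q` with `p - q ∈ L`. The ring map `ℚ[x] → ℚ[ℤ^r/L]`, `x^p ↦ [p]`, kills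
`I_B` and sends `x₁⋯x_r` to a unit, so it kills the saturation; and the kernel of a monoid-algebra
map induced by a monoid hom is spanned by differences of monomials with equal image, which here
are the generators of `I_L`. Conversely, the exponents `c` such that every `x^p - x^q` with
`p - q = c` lies in the saturation form a subgroup containing `B`, because the saturation may
cancel monomials. -/

open MvPolynomial

noncomputable def xpowQ {r : ℕ} (d : Fin r → ℕ) : MvPolynomial (Fin r) ℚ :=
  ∏ j, X j ^ d j

namespace Ideal

variable {R : Type*} [CommSemiring R]

def saturation (I : Ideal R) (h : R) : Ideal R where
  carrier := {a | ∃ m, a * h ^ m ∈ I}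
  zero_mem' := ⟨0, by simp⟩
  add_mem' := by
    rintro a b ⟨m, ha⟩ ⟨n, hb⟩
    refine ⟨m + n, ?_⟩
    have : (a + b) * h ^ (m + n) = a * h ^ m * h ^ n + b * h ^ n * h ^ m := by ring
    rw [this]
    exact add_mem (I.mul_mem_right _ ha) (I.mul_mem_right _ hb)
  smul_mem' := by
    rintro c a ⟨m, ha⟩
    exact ⟨m, by rw [smul_eq_mul, mul_assoc]; exact I.mul_mem_left c ha⟩

variable {I : Ideal R} {h a : R}

theorem le_saturation : I ≤ I.saturation h := fun a ha => ⟨0, by simpa using ha⟩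

theorem mem_saturation_iff_exists_pos : a ∈ I.saturation h ↔ ∃ m, 0 < m ∧ a * h ^ m ∈ I := by
  refine ⟨fun ⟨m, ha⟩ => ⟨m + 1, m.succ_pos, ?_⟩, fun ⟨m, _, ha⟩ => ⟨m, ha⟩⟩
  rw [pow_succ, ← mul_assoc]
  exact I.mul_mem_right h ha

theorem mem_saturation_of_mul_mem_of_dvd_pow {d : R} {n : ℕ} (hd : d ∣ h ^ n)
    (ha : a * d ∈ I.saturation h) : a ∈ I.saturation h := by
  obtain ⟨m, hm⟩ := ha
  obtain ⟨e, he⟩ := hd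
  refine ⟨n + m, ?_⟩
  have : a * h ^ (n + m) = a * d * h ^ m * e := by rw [pow_add, he]; ring
  rw [this]
  exact I.mul_mem_right e hm

theorem saturation_le_ker {S : Type*} [Semiring S] (f : R →+* S) (hI : I ≤ RingHom.ker f)
    (hh : IsUnit (f h)) : I.saturation h ≤ RingHom.ker f := by
  rintro a ⟨m, ha⟩
  have := hI ha
  rw [RingHom.mem_ker, map_mul, map_pow] at this
  exact (hh.pow m).mul_left_eq_zero.mp this

end Ideal

namespace AddMonoidAlgebra

variable {R M N : Type*}

theorem isUnit_single_one [Semiring R] [AddGroup N] (n : N) : IsUnit (single n (1 : R)) :=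
  (Group.isUnit (Multiplicative.ofAdd n)).map (of R N)

-- Moving every monomial to a chosen point of its fiber changes `x` by an element of the span, and
-- sends `x ∈ ker` to `0`, since the result factors through `mapDomain f x`.
theorem ker_mapDomainRingHom [Ring R] [AddMonoid M] [AddMonoid N] (f : M →+ N) :
    RingHom.ker (mapDomainRingHom R f) =
      Ideal.span {x | ∃ u v, f u = f v ∧ x = single u 1 - single v 1} := by
  refine le_antisymm (fun x hx => ?_) (Ideal.span_le.mpr ?_)
  · set s := Function.invFun f
    have hfs : ∀ u, f u = f (s (f u)) := fun u => (Function.invFun_eq ⟨u, rfl⟩).symm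
    have hcollapse : ∀ y : R[M], y - mapDomain s (mapDomain f y) ∈
        Ideal.span {x | ∃ u v, f u = f v ∧ x = single u 1 - single v 1} := by
      intro y
      induction y using induction_linear with
      | zero => simp [mapDomain_zero]
      | add y z hy hz =>
        rw [mapDomain_add, mapDomain_add, add_sub_add_comm]
        exact add_mem hy hz
      | single u c =>
        rw [mapDomain_single, mapDomain_single,
          show single u c - single (s (f u)) c = single 0 c * (single u 1 - single (s (f u)) 1)
            by rw [mul_sub, single_mul_single, single_mul_single, zero_add, zero_add, mul_one]]
        exact Ideal.mul_mem_left _ _ (Ideal.subset_span ⟨u, _, hfs u, rfl⟩)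
    have hx : mapDomain f x = 0 := hx
    simpa [hx, mapDomain_zero] using hcollapse x
  · rintro _ ⟨u, v, huv, rfl⟩
    rw [SetLike.mem_coe, RingHom.mem_ker, map_sub, mapDomainRingHom_apply, mapDomainRingHom_apply,
      mapDomain_single, mapDomain_single, huv, sub_self]

end AddMonoidAlgebra

section Lattice

variable {r : ℕ}

def intVec : (Fin r → ℕ) →+ (Fin r → ℤ) := (Nat.castAddMonoidHom ℤ).compLeft (Fin r)

@[simp] theorem intVec_apply (p : Fin r → ℕ) (j : Fin r) : intVec p j = p j := rfl

theorem intVec_posPart_sub_negPart (b : Fin r → ℤ) :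
    intVec (posPart b) - intVec (negPart b) = b := by
  funext j
  simp only [Pi.sub_apply, intVec_apply, _root_.posPart, _root_.negPart]
  omega

theorem exists_eq_add_posPart_of_intVec_sub_eq {p q : Fin r → ℕ} {c : Fin r → ℤ}
    (h : intVec p - intVec q = c) : ∃ w, p = w + _root_.posPart c ∧ q = w + _root_.negPart c := by
  refine ⟨p ⊓ q, ?_, ?_⟩ <;> funext j <;> subst h <;>
    simp only [Pi.add_apply, Pi.inf_apply, _root_.posPart, _root_.negPart, Pi.sub_apply,
      intVec_apply] <;> omega

theorem intVec_injective : Function.Injective (intVec (r := r)) :=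
  fun _ _ h => funext fun j => by simpa using congrFun h j

theorem xpowQ_add (p q : Fin r → ℕ) : xpowQ (p + q) = xpowQ p * xpowQ q := by
  simp only [xpowQ, Pi.add_apply, pow_add, Finset.prod_mul_distrib]

theorem xpowQ_eq_monomial (p : Fin r → ℕ) :
    xpowQ p = monomial (Finsupp.equivFunOnFinite.symm p) 1 := by
  rw [monomial_eq, C_1, one_mul, Finsupp.prod_fintype _ _ (fun _ => pow_zero _)]
  rfl

theorem xpowQ_dvd_prod_X_pow (w : Fin r → ℕ) : xpowQ w ∣ (∏ j, X j) ^ ∑ j, w j := by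
  rw [← Finset.prod_pow]
  exact Finset.prod_dvd_prod_of_dvd _ _ fun j _ =>
    pow_dvd_pow _ (Finset.single_le_sum (fun i _ => (w i).zero_le) (Finset.mem_univ j))

theorem mem_saturation_of_mul_xpowQ_mem {I : Ideal (MvPolynomial (Fin r) ℚ)}
    {a : MvPolynomial (Fin r) ℚ} {w : Fin r → ℕ} (ha : a * xpowQ w ∈ I.saturation (∏ j, X j)) :
    a ∈ I.saturation (∏ j, X j) :=
  Ideal.mem_saturation_of_mul_mem_of_dvd_pow (xpowQ_dvd_prod_X_pow w) ha

def latticeBinomials (L : AddSubgroup (Fin r → ℤ)) : Set (MvPolynomial (Fin r) ℚ) :=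
  {g | ∃ p q, intVec p - intVec q ∈ L ∧ g = xpowQ p - xpowQ q}

noncomputable def latticeMap (L : AddSubgroup (Fin r → ℤ)) :
    MvPolynomial (Fin r) ℚ →+* AddMonoidAlgebra ℚ ((Fin r → ℤ) ⧸ L) :=
  AddMonoidAlgebra.mapDomainRingHom ℚ
    ((QuotientAddGroup.mk' L).comp (intVec.comp Finsupp.coeFnAddHom))

theorem latticeMap_xpowQ (L : AddSubgroup (Fin r → ℤ)) (p : Fin r → ℕ) :
    latticeMap L (xpowQ p) = AddMonoidAlgebra.single (intVec p : (Fin r → ℤ) ⧸ L) 1 := by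
  rw [xpowQ_eq_monomial, ← single_eq_monomial, latticeMap,
    AddMonoidAlgebra.mapDomainRingHom_apply, AddMonoidAlgebra.mapDomain_single]
  rfl

theorem ker_latticeMap (L : AddSubgroup (Fin r → ℤ)) :
    RingHom.ker (latticeMap L) = Ideal.span (latticeBinomials L) := by
  rw [latticeMap, AddMonoidAlgebra.ker_mapDomainRingHom]
  congr 1
  ext g
  simp only [latticeBinomials, xpowQ_eq_monomial, ← single_eq_monomial,
    Finsupp.equivFunOnFinite.symm.exists_congr_left, Equiv.symm_symm, Equiv.symm_apply_apply,
    AddMonoidHom.comp_apply, QuotientAddGroup.mk'_apply,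
    QuotientAddGroup.eq_iff_sub_mem]
  rfl

theorem isUnit_latticeMap_prod_X (L : AddSubgroup (Fin r → ℤ)) :
    IsUnit (latticeMap L (∏ j, X j)) := by
  rw [show (∏ j, X j : MvPolynomial (Fin r) ℚ) = xpowQ 1 by simp [xpowQ], latticeMap_xpowQ]
  exact AddMonoidAlgebra.isUnit_single_one _

def binomialExponents (J : Ideal (MvPolynomial (Fin r) ℚ)) : Set (Fin r → ℤ) :=
  {c | ∀ p q, intVec p - intVec q = c → xpowQ p - xpowQ q ∈ J}

variable {J : Ideal (MvPolynomial (Fin r) ℚ)}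

theorem mem_binomialExponents_of_binomial_mem {b : Fin r → ℤ}
    (hb : xpowQ (posPart b) - xpowQ (negPart b) ∈ J) : b ∈ binomialExponents J := by
  intro p q hpq
  obtain ⟨w, rfl, rfl⟩ := exists_eq_add_posPart_of_intVec_sub_eq hpq
  rw [xpowQ_add, xpowQ_add, ← mul_sub]
  exact J.mul_mem_left _ hb

-- Passing through the intermediate exponent `q + d⁺` needs the extra factor `x^{d⁻}`, which
-- `hJ` cancels again.
theorem add_mem_binomialExponents (hJ : ∀ a w, a * xpowQ w ∈ J → a ∈ J) {c d : Fin r → ℤ}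
    (hc : c ∈ binomialExponents J) (hd : d ∈ binomialExponents J) :
    c + d ∈ binomialExponents J := by
  intro p q hpq
  refine hJ _ (_root_.negPart d) ?_
  have hd' := intVec_posPart_sub_negPart d
  have hleft : intVec (p + _root_.negPart d) - intVec (q + _root_.posPart d) = c := by
    rw [map_add, map_add]; linear_combination hpq - hd'
  have hright : intVec (q + _root_.posPart d) - intVec (q + _root_.negPart d) = d := by
    rw [map_add, map_add]; linear_combination hd'
  have := add_mem (hc _ _ hleft) (hd _ _ hright)
  rwa [sub_add_sub_cancel, xpowQ_add, xpowQ_add, ← sub_mul] at this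

theorem neg_mem_binomialExponents {c : Fin r → ℤ} (hc : c ∈ binomialExponents J) :
    -c ∈ binomialExponents J := by
  intro p q hpq
  rw [← neg_sub]
  exact J.neg_mem (hc q p (by rw [← neg_sub, hpq, neg_neg]))

theorem zero_mem_binomialExponents : (0 : Fin r → ℤ) ∈ binomialExponents J := by
  intro p q hpq
  rw [intVec_injective (sub_eq_zero.mp hpq), sub_self]
  exact J.zero_mem

theorem span_latticeBinomials_closure_le (hJ : ∀ a w, a * xpowQ w ∈ J → a ∈ J)
    {B : Set (Fin r → ℤ)} (hB : ∀ b ∈ B, xpowQ (posPart b) - xpowQ (negPart b) ∈ J) :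
    Ideal.span (latticeBinomials (AddSubgroup.closure B)) ≤ J := by
  rw [Ideal.span_le]
  rintro _ ⟨p, q, hpq, rfl⟩
  refine AddSubgroup.closure_induction (p := fun c _ => c ∈ binomialExponents J)
    (fun b hb => mem_binomialExponents_of_binomial_mem (hB b hb)) zero_mem_binomialExponents
    (fun _ _ _ _ => add_mem_binomialExponents hJ) (fun _ _ => neg_mem_binomialExponents) hpq p q rfl

end Lattice

/-- The saturation of a pure binomial ideal `I_B` with respect to `x₁⋯x_r` is again
generated by pure difference binomials. -/
theorem stmt16 (r : ℕ) (B : Finset (Fin r → ℤ)) :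
    let I : Ideal (MvPolynomial (Fin r) ℚ) :=
      Ideal.span ((fun b => xpowQ (posPart b) - xpowQ (negPart b)) '' (B : Set (Fin r → ℤ)))
    let h : MvPolynomial (Fin r) ℚ := ∏ j, X j
    ∃ G : Set (MvPolynomial (Fin r) ℚ),
      (∀ g ∈ G, ∃ p q : Fin r → ℕ, g = xpowQ p - xpowQ q) ∧
      {a : MvPolynomial (Fin r) ℚ | ∃ m : ℕ, 0 < m ∧ a * h ^ m ∈ I}
        = (Ideal.span G : Set (MvPolynomial (Fin r) ℚ)) := by
  intro I h
  set L := AddSubgroup.closure (B : Set (Fin r → ℤ))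
  have hIL : I ≤ RingHom.ker (latticeMap L) := by
    rw [ker_latticeMap, Ideal.span_le]
    rintro _ ⟨b, hb, rfl⟩
    refine Ideal.subset_span ⟨_, _, ?_, rfl⟩
    rw [intVec_posPart_sub_negPart]
    exact AddSubgroup.subset_closure hb
  have hsat : I.saturation h = Ideal.span (latticeBinomials L) := by
    refine le_antisymm ?_ ?_
    · rw [← ker_latticeMap]
      exact Ideal.saturation_le_ker _ hIL (isUnit_latticeMap_prod_X L)
    · exact span_latticeBinomials_closure_le (fun _ _ => mem_saturation_of_mul_xpowQ_mem)
        fun b hb => Ideal.le_saturation (Ideal.subset_span ⟨b, hb, rfl⟩)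
  refine ⟨latticeBinomials L, fun g ⟨p, q, _, hg⟩ => ⟨p, q, hg⟩, ?_⟩
  ext a
  rw [SetLike.mem_coe, ← hsat, Ideal.mem_saturation_iff_exists_pos]
  rfl
end

section
/- Let b₁,...,bₙ ∈ ℤ^r with all entries bounded in absolute value by β ≥ 1. Then any nonzero solution t ∈ ℕ^n of a system of n-1 homogeneous linear equations of the form Σ_{i=1}^n t(i)·((b_i⁺)_j - (b_i⁻)_j) = 0 (for n-1 choices of j), which generates an extremal ray of the corresponding cone, can be chosen with L¹-norm Σ_i t(i) ≤ (2nβ)^{n-1}. -/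
/-!
Take a nonzero nonnegative integer solution `t` of minimal support `S`. For any integer
solution `u` supported in `S` with a positive entry, choose `i₀` minimising `t i / u i` over the
positive entries of `u`; then `u i₀ • t - t i₀ • u` is a nonnegative solution whose support misses
`i₀`, so it vanishes and `u` is a positive multiple of `t`. Hence every integer solution supported
in `S` has constant sign.

As `t` is a nonzero kernel vector of the matrix restricted to the columns `S`, that matrix has rank
`k < |S|`. Siegel's lemma applied to `k` independent rows yields a nonzero integer solution
supported in `S` with entries at most `(|S| β) ^ k`. Its absolute value is a nonnegative solution
of `L¹`-norm at most `|S| (|S| β) ^ (|S| - 1) ≤ (2 n β) ^ (n - 1)`.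
-/

open Function Matrix Module

attribute [local instance] Matrix.seminormedAddCommGroup

theorem Real.rpow_div_sub_le_pow {a : ℝ} (ha : 1 ≤ a) {k N : ℕ} (hkN : k < N) :
    a ^ ((k : ℝ) / (N - k)) ≤ a ^ k := by
  rw [← Real.rpow_natCast a k]
  refine Real.rpow_le_rpow_of_exponent_le ha (div_le_self (Nat.cast_nonneg k) ?_)
  rw [← Nat.cast_sub hkN.le]
  exact_mod_cast Nat.sub_pos_of_lt hkN

theorem card_mul_pow_le_two_mul_pow {s n β : ℕ} (hs : s ≤ n) (hβ : 1 ≤ β) :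
    s * (s * β) ^ (s - 1) ≤ (2 * n * β) ^ (n - 1) := by
  rcases Nat.eq_zero_or_pos s with rfl | hs0
  · simp
  have hnβ : 1 ≤ n * β := Nat.mul_pos (by omega) hβ
  calc s * (s * β) ^ (s - 1) ≤ n * (n * β) ^ (n - 1) := by gcongr
    _ ≤ 2 ^ (n - 1) * (n * β) ^ (n - 1) := by
        have : n - 1 < 2 ^ (n - 1) := Nat.lt_two_pow_self
        gcongr
        omega
    _ = (2 * n * β) ^ (n - 1) := by rw [mul_assoc, ← mul_pow]

section

variable {m n : Type*} [Fintype n]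

theorem Matrix.map_mulVec_comp_eq_zero_iff {R S : Type*} [NonAssocSemiring R]
    [NonAssocSemiring S] {f : R →+* S} (hf : Injective f) (A : Matrix m n R) (x : n → R) :
    A.map f *ᵥ (f ∘ x) = 0 ↔ A *ᵥ x = 0 := by
  simp only [funext_iff, Pi.zero_apply, ← RingHom.map_mulVec, map_eq_zero_iff f hf]

theorem Matrix.rank_lt_card_width_of_mulVec_eq_zero {K : Type*} [Field K] (A : Matrix m n K)
    {v : n → K} (hv : v ≠ 0) (hAv : A *ᵥ v = 0) : A.rank < Fintype.card n := by
  have hsum := LinearMap.finrank_range_add_finrank_ker A.mulVecLin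
  have hker : 0 < finrank K (LinearMap.ker A.mulVecLin) :=
    finrank_pos_iff_exists_ne_zero.2 ⟨⟨v, hAv⟩, fun h => hv (congrArg Subtype.val h)⟩
  rw [finrank_fintype_fun_eq_card] at hsum
  unfold rank
  omega

theorem Matrix.mulVec_eq_zero_of_span_row_eq {R : Type*} [CommSemiring R] {A : Matrix m n R}
    {κ : Type*} {a : κ → m} (hspan : Submodule.span R (Set.range (A.row ∘ a)) =
      Submodule.span R (Set.range A.row))
    {x : n → R} (hx : A.submatrix a id *ᵥ x = 0) : A *ᵥ x = 0 := by
  have hle : Submodule.span R (Set.range A.row) ≤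
      LinearMap.ker ((dotProductBilin R R).flip x) := by
    rw [← hspan, Submodule.span_le]
    rintro _ ⟨k, rfl⟩
    exact congrFun hx k
  ext i
  exact hle (Submodule.subset_span (Set.mem_range_self i))

theorem exists_ne_zero_mulVec_eq_zero_natAbs_le_pow_rank [Fintype m] (A : Matrix m n ℤ) {β : ℕ}
    (hβ : 1 ≤ β) (hA : ∀ i j, |A i j| ≤ β)
    (hrank : (A.map (Int.castRingHom ℚ)).rank < Fintype.card n) :
    ∃ x : n → ℤ, x ≠ 0 ∧ A *ᵥ x = 0 ∧
      ∀ j, (x j).natAbs ≤ (Fintype.card n * β) ^ (A.map (Int.castRingHom ℚ)).rank := by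
  classical
  obtain ⟨κ, a, ha, hspan, hli⟩ := exists_linearIndependent' ℚ (A.map (Int.castRingHom ℚ)).row
  have : Fintype κ := Fintype.ofInjective a ha
  have hcard : (A.map (Int.castRingHom ℚ)).rank = Fintype.card κ := by
    rw [rank_eq_finrank_span_row, ← hspan, finrank_span_eq_card hli]
  rw [hcard] at hrank ⊢
  suffices ∃ x : n → ℤ, x ≠ 0 ∧ A.submatrix a id *ᵥ x = 0 ∧
      ∀ j, (x j).natAbs ≤ (Fintype.card n * β) ^ Fintype.card κ by
    obtain ⟨x, hx0, hAx, hx⟩ := this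
    have hAxℚ := (map_mulVec_comp_eq_zero_iff (Int.castRingHom ℚ).injective_int _ x).2 hAx
    exact ⟨x, hx0, (map_mulVec_comp_eq_zero_iff (Int.castRingHom ℚ).injective_int _ x).1
      (mulVec_eq_zero_of_span_row_eq hspan hAxℚ), hx⟩
  rcases (Fintype.card κ).eq_zero_or_pos with hκ | hκ
  · obtain ⟨j⟩ : Nonempty n := Fintype.card_pos_iff.1 (by omega)
    have : IsEmpty κ := Fintype.card_eq_zero_iff.1 hκ
    refine ⟨Pi.single j 1, by simp, Subsingleton.elim _ _, fun j' => ?_⟩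
    rw [hκ, pow_zero]
    by_cases h : j' = j <;> simp [h]
  obtain ⟨x, hx0, hAx, hx⟩ := Int.Matrix.exists_ne_zero_int_vec_norm_le (A.submatrix a id) hrank hκ
  refine ⟨x, hx0, hAx, fun j => ?_⟩
  have hnorm : max 1 ‖A.submatrix a id‖ ≤ β := by
    refine max_le (by exact_mod_cast hβ) ((norm_le_iff (by positivity)).2 fun k j => ?_)
    rw [Int.norm_eq_abs]
    exact_mod_cast hA (a k) j
  have hbase : (1 : ℝ) ≤ Fintype.card n * β :=
    one_le_mul_of_one_le_of_one_le (by exact_mod_cast hκ.trans hrank) (by exact_mod_cast hβ)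
  have hexp : 0 ≤ (Fintype.card κ : ℝ) / (Fintype.card n - Fintype.card κ) :=
    div_nonneg (Nat.cast_nonneg _) (sub_nonneg.2 (by exact_mod_cast hrank.le))
  suffices ((x j).natAbs : ℝ) ≤ (Fintype.card n * β : ℝ) ^ Fintype.card κ by exact_mod_cast this
  calc ((x j).natAbs : ℝ) = ‖x j‖ := by rw [Nat.cast_natAbs, Int.norm_eq_abs, Int.cast_abs]
    _ ≤ ‖x‖ := norm_le_pi_norm x j
    _ ≤ (Fintype.card n * max 1 ‖A.submatrix a id‖) ^
        ((Fintype.card κ : ℝ) / (Fintype.card n - Fintype.card κ)) := hx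
    _ ≤ (Fintype.card n * β : ℝ) ^ ((Fintype.card κ : ℝ) / (Fintype.card n - Fintype.card κ)) :=
        Real.rpow_le_rpow (by positivity) (by gcongr) hexp
    _ ≤ (Fintype.card n * β : ℝ) ^ Fintype.card κ := Real.rpow_div_sub_le_pow hbase hrank

theorem Matrix.mulVec_eq_submatrix_mulVec_of_support_subset {R : Type*}
    [NonUnitalNonAssocSemiring R] (A : Matrix m n R) {s : Finset n} {v : n → R}
    (hv : support v ⊆ s) : A *ᵥ v = A.submatrix id ((↑) : s → n) *ᵥ fun i => v i := by
  ext j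
  simp only [mulVec, dotProduct, submatrix_apply, id]
  rw [Finset.sum_coe_sort s (fun i => A j i * v i)]
  refine (Finset.sum_subset (Finset.subset_univ s) fun i _ hi => ?_).symm
  rw [notMem_support.1 (mt (@hv i) hi), mul_zero]

theorem exists_ne_zero_mulVec_eq_zero_support_subset_sum_natAbs_le [Fintype m]
    (A : Matrix m n ℤ) {β : ℕ} (hβ : 1 ≤ β) (hA : ∀ i j, |A i j| ≤ β) {s : Finset n}
    {v : n → ℤ} (hv0 : v ≠ 0) (hAv : A *ᵥ v = 0) (hvs : support v ⊆ s) :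
    ∃ u : n → ℤ, u ≠ 0 ∧ A *ᵥ u = 0 ∧ support u ⊆ s ∧
      ∑ i, (u i).natAbs ≤ s.card * (s.card * β) ^ (s.card - 1) := by
  classical
  set As := A.submatrix id ((↑) : s → n)
  obtain ⟨i₀, hi₀⟩ := Function.ne_iff.1 hv0
  have hrank : (As.map (Int.castRingHom ℚ)).rank < s.card := by
    rw [← Fintype.card_coe]
    refine rank_lt_card_width_of_mulVec_eq_zero _ (v := Int.castRingHom ℚ ∘ fun i : s => v i)
      (Function.ne_iff.2 ⟨⟨i₀, hvs hi₀⟩, by simpa using hi₀⟩) ?_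
    rw [map_mulVec_comp_eq_zero_iff (Int.castRingHom ℚ).injective_int,
      ← mulVec_eq_submatrix_mulVec_of_support_subset A hvs, hAv]
  obtain ⟨x, hx0, hAx, hx⟩ := exists_ne_zero_mulVec_eq_zero_natAbs_le_pow_rank As hβ
    (fun i j => hA i j) (by rwa [Fintype.card_coe])
  rw [Fintype.card_coe] at hx
  set u : n → ℤ := fun i => if h : i ∈ s then x ⟨i, h⟩ else 0
  have hus : support u ⊆ s := fun i hi => by_contra fun h => hi (dif_neg h)
  have hux : (fun i : s => u i) = x := funext fun i => dif_pos i.2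
  have hbase : 1 ≤ s.card * β := Nat.mul_pos (Finset.card_pos.2 ⟨i₀, hvs hi₀⟩) hβ
  refine ⟨u, fun hu => hx0 (by rw [← hux, hu]; rfl), ?_, hus, ?_⟩
  · rw [mulVec_eq_submatrix_mulVec_of_support_subset A hus, hux, hAx]
  calc ∑ i, (u i).natAbs = ∑ i ∈ s, (u i).natAbs :=
        (Finset.sum_subset (Finset.subset_univ s) fun i _ hi => by
          rw [notMem_support.1 (mt (@hus i) hi), Int.natAbs_zero]).symm
    _ = ∑ i : s, (x i).natAbs := by rw [← Finset.sum_coe_sort, ← hux]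
    _ ≤ ∑ _i : s, (s.card * β) ^ (s.card - 1) :=
        Finset.sum_le_sum fun i _ => (hx i).trans (Nat.pow_le_pow_right hbase (by omega))
    _ = s.card * (s.card * β) ^ (s.card - 1) := by simp

theorem exists_nonneg_smul_sub_smul {t u : n → ℤ} (ht : 0 ≤ t) (hpos : ∃ i, 0 < u i) :
    ∃ i₀, 0 < u i₀ ∧ 0 ≤ u i₀ • t - t i₀ • u := by
  obtain ⟨i₀, hi₀, hmin⟩ := Finset.exists_min_image {i | 0 < u i} (fun i => (t i : ℚ) / u i)
    (let ⟨i, hi⟩ := hpos; ⟨i, by simpa using hi⟩)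
  simp only [Finset.mem_filter, Finset.mem_univ, true_and] at hi₀ hmin
  refine ⟨i₀, hi₀, fun i => ?_⟩
  simp only [Pi.zero_apply, Pi.sub_apply, Pi.smul_apply, smul_eq_mul, sub_nonneg]
  rcases le_or_gt (u i) 0 with hui | hui
  · nlinarith [mul_nonneg hi₀.le (ht i), mul_nonpos_of_nonneg_of_nonpos (ht i₀) hui]
  · have := hmin i hui
    rw [div_le_div_iff₀ (by exact_mod_cast hi₀) (by exact_mod_cast hui)] at this
    exact_mod_cast (by linarith : (t i₀ : ℚ) * u i ≤ u i₀ * t i)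

structure IsMinimalSupportSolution (A : Matrix m n ℤ) (t : n → ℤ) : Prop where
  nonneg : 0 ≤ t
  ne_zero : t ≠ 0
  mulVec_eq_zero : A *ᵥ t = 0
  minimal : ∀ t', 0 ≤ t' → A *ᵥ t' = 0 → support t' ⊂ support t → t' = 0

theorem exists_isMinimalSupportSolution (A : Matrix m n ℤ) {t₀ : n → ℤ} (ht₀ : 0 ≤ t₀)
    (ht₀0 : t₀ ≠ 0) (hAt₀ : A *ᵥ t₀ = 0) : ∃ t, IsMinimalSupportSolution A t := by
  obtain ⟨t, ⟨ht, ht0, hAt⟩, hmin⟩ := (InvImage.wf support wellFounded_lt).has_min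
    {t | 0 ≤ t ∧ t ≠ 0 ∧ A *ᵥ t = 0} ⟨t₀, ht₀, ht₀0, hAt₀⟩
  refine ⟨t, ht, ht0, hAt, fun t' ht' hAt' hsub => ?_⟩
  by_contra ht'0
  exact hmin t' ⟨ht', ht'0, hAt'⟩ hsub

namespace IsMinimalSupportSolution

variable {A : Matrix m n ℤ} {t u : n → ℤ}

theorem nonneg_of_exists_pos (ht : IsMinimalSupportSolution A t) (hAu : A *ᵥ u = 0)
    (hut : support u ⊆ support t) (hpos : ∃ i, 0 < u i) : 0 ≤ u := by
  obtain ⟨htnn, -, hAt, hmin⟩ := ht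
  obtain ⟨i₀, hui₀, hnonneg⟩ := exists_nonneg_smul_sub_smul htnn hpos
  have hti₀ : 0 < t i₀ := lt_of_le_of_ne (htnn i₀) (Ne.symm (hut hui₀.ne'))
  have hsub : support (u i₀ • t - t i₀ • u) ⊂ support t := by
    refine ⟨fun i hi => ?_, fun h => ?_⟩
    · rw [mem_support] at hi ⊢
      contrapose! hi
      simp [hi, notMem_support.1 (mt (@hut i) (notMem_support.2 hi))]
    · simpa [mul_comm] using h hti₀.ne'
  have hzero : u i₀ • t - t i₀ • u = 0 :=
    hmin _ hnonneg (by simp only [mulVec_sub, mulVec_smul, hAt, hAu, smul_zero, sub_self]) hsub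
  intro i
  have := congrFun hzero i
  simp only [Pi.sub_apply, Pi.smul_apply, smul_eq_mul, Pi.zero_apply, sub_eq_zero] at this
  exact nonneg_of_mul_nonneg_right (this ▸ mul_nonneg hui₀.le (htnn i)) hti₀

theorem mulVec_abs_eq_zero (ht : IsMinimalSupportSolution A t) (hAu : A *ᵥ u = 0)
    (hut : support u ⊆ support t) : A *ᵥ |u| = 0 := by
  by_cases hpos : ∃ i, 0 < u i
  · rwa [abs_of_nonneg (ht.nonneg_of_exists_pos hAu hut hpos)]
  · rw [abs_of_nonpos fun i => not_lt.1 fun hi => hpos ⟨i, hi⟩, mulVec_neg, hAu, neg_zero]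

end IsMinimalSupportSolution

end

theorem stmt17_general (r n : ℕ) (β : ℕ) (hβ : 1 ≤ β) (b : Fin n → (Fin r → ℤ))
    (hb : ∀ i j, |b i j| ≤ (β : ℤ))
    (J : Finset (Fin r))
    (t₀ : Fin n → ℕ) (ht₀ : t₀ ≠ 0)
    (h : ∀ j ∈ J, ∑ i, (t₀ i : ℤ) * b i j = 0) :
    ∃ t : Fin n → ℕ, t ≠ 0 ∧ (∀ j ∈ J, ∑ i, (t i : ℤ) * b i j = 0) ∧
      (∑ i, t i) ≤ (2 * n * β) ^ (n - 1) := by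
  set A : Matrix J (Fin n) ℤ := Matrix.of fun j i => b i j
  have hsol : ∀ t : Fin n → ℤ, A *ᵥ t = 0 ↔ ∀ j ∈ J, ∑ i, t i * b i j = 0 := by
    intro t
    simp [A, funext_iff, mulVec, dotProduct, mul_comm]
  obtain ⟨t, htmin⟩ := exists_isMinimalSupportSolution A (t₀ := fun i => (t₀ i : ℤ))
    (fun i => by simp) (by simpa [funext_iff] using ht₀) ((hsol _).2 h)
  set s := Finset.univ.filter (t · ≠ 0)
  have hs : (s : Set (Fin n)) = support t := by ext; simp [s]
  obtain ⟨u, hu0, hAu, hus, hsum⟩ := exists_ne_zero_mulVec_eq_zero_support_subset_sum_natAbs_le A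
    hβ (fun j i => hb i j) htmin.ne_zero htmin.mulVec_eq_zero hs.ge
  refine ⟨fun i => (u i).natAbs, fun h => hu0 (funext fun i => Int.natAbs_eq_zero.1 (congrFun h i)),
    ?_, hsum.trans (card_mul_pow_le_two_mul_pow (by simpa using s.card_le_univ) hβ)⟩
  refine (hsol _).1 ?_
  simp_rw [Int.natCast_natAbs]
  exact htmin.mulVec_abs_eq_zero hAu (hus.trans hs.le)

/-- Siegel-type bound: if `b₁,…,bₙ ∈ ℤ^r` have entries bounded by `β ≥ 1` and a
system of `n-1` homogeneous equations `Σᵢ t(i)·(bᵢ)_j = 0` (for `j` in a set `J` of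
`n-1` coordinates) admits a nonzero solution `t ∈ ℕ^n`, then it admits a nonzero
solution of `L¹`-norm at most `(2nβ)^{n-1}`. -/
theorem stmt17 (r n : ℕ) (β : ℕ) (hβ : 1 ≤ β) (b : Fin n → (Fin r → ℤ))
    (hb : ∀ i j, |b i j| ≤ (β : ℤ))
    (J : Finset (Fin r)) (hJ : J.card = n - 1)
    (t₀ : Fin n → ℕ) (ht₀ : t₀ ≠ 0)
    (h : ∀ j ∈ J, ∑ i, (t₀ i : ℤ) * b i j = 0) :
    ∃ t : Fin n → ℕ, t ≠ 0 ∧ (∀ j ∈ J, ∑ i, (t i : ℤ) * b i j = 0) ∧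
      (∑ i, t i) ≤ (2 * n * β) ^ (n - 1) :=
  stmt17_general r n β hβ b hb J t₀ ht₀ h
end
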